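/- arXiv:2305.02894 — 2 statements merged into one kernel-verified Lean document; each statement's English description precedes it below -/
import Mathlib

section
/- Let d ∈ ℕ, α > 0, and let L : ℝ^d → ℝ be bounded below with infimum L̲ := inf L and satisfy the local Lipschitz estimate |L(θ) − L(θ̂)| ≤ M_L (|θ| + |θ̂|)|θ − θ̂| for all θ, θ̂ ∈ ℝ^d, for some M_L > 0. Then the map h(θ) := θ e^{−α L(θ)} satisfies, for all θ, θ̂ ∈ ℝ^d, |h(θ) − h(θ̂)| ≤ e^{−α L̲}|θ − θ̂| + α e^{−α L̲} M_L |θ̂| (|θ| + |θ̂|)|θ − θ̂|. -/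
/-!
Write `h θ - h θ' = e^{-α L θ} (θ - θ') + (e^{-α L θ} - e^{-α L θ'}) θ'`. Both exponentials are at
most `e^{-α L̲}`; this bounds the first coefficient and, by the mean value theorem for `exp` on
`(-∞, -α L̲]`, gives `|e^{-α L θ} - e^{-α L θ'}| ≤ α e^{-α L̲} |L θ - L θ'|` for the second.
-/

open Real

theorem norm_smul_sub_smul_le {𝕜 E : Type*} [NormedField 𝕜] [SeminormedAddCommGroup E]
    [NormedSpace 𝕜 E] (a b : 𝕜) (x y : E) :
    ‖a • x - b • y‖ ≤ ‖a‖ * ‖x - y‖ + ‖a - b‖ * ‖y‖ := by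
  calc ‖a • x - b • y‖ = ‖a • (x - y) + (a - b) • y‖ := by congr 1; module
    _ ≤ ‖a‖ * ‖x - y‖ + ‖a - b‖ * ‖y‖ := by
      simpa only [norm_smul] using norm_add_le (a • (x - y)) ((a - b) • y)

theorem Real.abs_exp_sub_exp_le_of_le {a b c : ℝ} (ha : a ≤ c) (hb : b ≤ c) :
    |exp a - exp b| ≤ exp c * |a - b| := by
  simpa only [Real.norm_eq_abs] using
    (convex_Iic c).norm_image_sub_le_of_norm_deriv_le (fun _ _ => differentiableAt_exp)
      (fun x hx => by simpa [Real.norm_eq_abs] using exp_le_exp.2 hx) hb ha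

theorem Real.abs_exp_neg_mul_sub_exp_neg_mul_le {α m u v : ℝ} (hα : 0 ≤ α)
    (hu : m ≤ u) (hv : m ≤ v) :
    |exp (-α * u) - exp (-α * v)| ≤ α * exp (-α * m) * |u - v| := by
  have hle : ∀ {w}, m ≤ w → -α * w ≤ -α * m := fun hw => by nlinarith
  calc |exp (-α * u) - exp (-α * v)| ≤ exp (-α * m) * |-α * u - -α * v| :=
        abs_exp_sub_exp_le_of_le (hle hu) (hle hv)
    _ = α * exp (-α * m) * |u - v| := by
        rw [show -α * u - -α * v = -α * (u - v) by ring, abs_mul, abs_neg, abs_of_nonneg hα]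
        ring

theorem weighted_identity_locally_lipschitz_general {d : ℕ} (α ML : ℝ)
    (hα : 0 < α)
    (L : EuclideanSpace ℝ (Fin d) → ℝ)
    (hbddBelow : BddBelow (Set.range L))
    (hlip : ∀ θ θ' : EuclideanSpace ℝ (Fin d),
      |L θ - L θ'| ≤ ML * (‖θ‖ + ‖θ'‖) * ‖θ - θ'‖) :
    ∀ θ θ' : EuclideanSpace ℝ (Fin d),
      ‖Real.exp (-α * L θ) • θ - Real.exp (-α * L θ') • θ'‖ ≤
        Real.exp (-α * sInf (Set.range L)) * ‖θ - θ'‖ +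
          α * Real.exp (-α * sInf (Set.range L)) * ML * ‖θ'‖ * (‖θ‖ + ‖θ'‖) * ‖θ - θ'‖ := by
  intro θ θ'
  set m := sInf (Set.range L)
  have hm : ∀ x, m ≤ L x := fun x => csInf_le hbddBelow ⟨x, rfl⟩
  have hexp : exp (-α * L θ) ≤ exp (-α * m) := exp_le_exp.2 (by nlinarith [hm θ])
  calc ‖exp (-α * L θ) • θ - exp (-α * L θ') • θ'‖
      ≤ |exp (-α * L θ)| * ‖θ - θ'‖ + |exp (-α * L θ) - exp (-α * L θ')| * ‖θ'‖ :=
        norm_smul_sub_smul_le _ _ θ θ'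
    _ ≤ exp (-α * m) * ‖θ - θ'‖ + α * exp (-α * m) * |L θ - L θ'| * ‖θ'‖ := by
        rw [abs_of_pos (exp_pos _)]
        gcongr
        exact abs_exp_neg_mul_sub_exp_neg_mul_le hα.le (hm θ) (hm θ')
    _ ≤ exp (-α * m) * ‖θ - θ'‖ + α * exp (-α * m) * (ML * (‖θ‖ + ‖θ'‖) * ‖θ - θ'‖) * ‖θ'‖ := by
        gcongr
        exact hlip θ θ'
    _ = _ := by ring

/-- if `L` is bounded below with infimum `L̲` and locally Lipschitz in the sense
`|L(θ) - L(θ̂)| ≤ M_L (|θ| + |θ̂|)|θ - θ̂|`, then `h(θ) := θ e^{-α L(θ)}` satisfies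
`|h(θ) - h(θ̂)| ≤ e^{-α L̲}|θ - θ̂| + α e^{-α L̲} M_L |θ̂| (|θ| + |θ̂|) |θ - θ̂|`. -/
theorem weighted_identity_locally_lipschitz {d : ℕ} (α ML : ℝ)
    (hα : 0 < α) (hML : 0 < ML)
    (L : EuclideanSpace ℝ (Fin d) → ℝ)
    (hbddBelow : BddBelow (Set.range L))
    (hlip : ∀ θ θ' : EuclideanSpace ℝ (Fin d),
      |L θ - L θ'| ≤ ML * (‖θ‖ + ‖θ'‖) * ‖θ - θ'‖) :
    ∀ θ θ' : EuclideanSpace ℝ (Fin d),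
      ‖Real.exp (-α * L θ) • θ - Real.exp (-α * L θ') • θ'‖ ≤
        Real.exp (-α * sInf (Set.range L)) * ‖θ - θ'‖ +
          α * Real.exp (-α * sInf (Set.range L)) * ML * ‖θ'‖ * (‖θ‖ + ‖θ'‖) * ‖θ - θ'‖ :=
  weighted_identity_locally_lipschitz_general α ML hα L hbddBelow hlip
end

section
/- Let d ∈ ℕ, T > 0, α > 0, K > 0, and for k = 1, 2 let L_k : ℝ^d → ℝ satisfy Assumption 1 and be bounded above with supremum L̄_k := sup L_k. Let ν¹, ν² : [0, T] → P₂(ℝ^d) be continuous curves of Borel probability measures with sup_{t ∈ [0,T]} ∫ |θ|⁴ dν_t¹ ≤ K and sup_{t ∈ [0,T]} ∫ |θ|⁴ dν_t² ≤ K. Let w₁, w₂ > 0 with w₁ + w₂ = 1, and set ν_t := w₁ ν_t¹ + w₂ ν_t². Then there exists a constant C > 0, depending only on α, K, and the constants M_{L_k}, C_{L_k}, L̄_k, L̲_k of L₁ and L₂, such that for all s, t ∈ (0, T) and k = 1, 2: |m_{L_k}^α[ν_t] − m_{L_k}^α[ν_s]| ≤ C (w₁ W₂(ν_t¹, ν_s¹)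 + w₂ W₂(ν_t², ν_s²)). -/
open MeasureTheory Real Set

/-- The consensus point `m_L^α[ρ] = (∫ θ e^{-αL(θ)} dρ) / (∫ e^{-αL(θ)} dρ)`. -/
noncomputable def consensusPoint {d : ℕ} (α : ℝ) (L : EuclideanSpace ℝ (Fin d) → ℝ)
    (ρ : Measure (EuclideanSpace ℝ (Fin d))) : EuclideanSpace ℝ (Fin d) :=
  (∫ θ, Real.exp (-α * L θ) ∂ρ)⁻¹ • ∫ θ, Real.exp (-α * L θ) • θ ∂ρ

/-- The 2-Wasserstein distance between two Borel probability measures on `ℝ^d`: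
the infimum over couplings `π` of `(∬ |θ - θ̂|² dπ)^{1/2}`. -/
noncomputable def W2 {d : ℕ} (μ ν : Measure (EuclideanSpace ℝ (Fin d))) : ℝ :=
  sInf {c : ℝ | ∃ pl : Measure (EuclideanSpace ℝ (Fin d) × EuclideanSpace ℝ (Fin d)),
    IsProbabilityMeasure pl ∧ pl.map Prod.fst = μ ∧ pl.map Prod.snd = ν ∧
    c = (∫ p, ‖p.1 - p.2‖ ^ 2 ∂pl) ^ (1/2 : ℝ)}

/-- Assumption 1 of the paper for a loss function `L` with constants
`M_L, C_L, M_{∇L}, C_{∇L}`. -/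
structure Assumption1 {d : ℕ} (L : EuclideanSpace ℝ (Fin d) → ℝ)
    (ML CL MgL CgL : ℝ) : Prop where
  ML_pos : 0 < ML
  CL_pos : 0 < CL
  MgL_pos : 0 < MgL
  CgL_pos : 0 < CgL
  bddBelow : BddBelow (Set.range L)
  differentiable : Differentiable ℝ L
  locLip : ∀ θ θ' : EuclideanSpace ℝ (Fin d),
    |L θ - L θ'| ≤ ML * (‖θ‖ + ‖θ'‖) * ‖θ - θ'‖
  quadGrowth : ∀ θ : EuclideanSpace ℝ (Fin d),
    L θ - sInf (Set.range L) ≤ CL * (1 + ‖θ‖ ^ 2)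
  gradLip : ∀ θ θ' : EuclideanSpace ℝ (Fin d),
    ‖gradient L θ - gradient L θ'‖ ≤ MgL * ‖θ - θ'‖
  gradBdd : ∀ θ : EuclideanSpace ℝ (Fin d), ‖gradient L θ‖ ≤ CgL

/-- The mixture `w₁ ν¹ + w₂ ν²` of two (curves of) measures. -/
noncomputable def mix2 {d : ℕ} (w : Fin 2 → ℝ)
    (ν : Fin 2 → ℝ → Measure (EuclideanSpace ℝ (Fin d))) (t : ℝ) :
    Measure (EuclideanSpace ℝ (Fin d)) :=
  ENNReal.ofReal (w 0) • ν 0 t + ENNReal.ofReal (w 1) • ν 1 t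

/-!
The consensus point is the quotient `a⁻¹ • v` of the weighted moments
`(a, v) = ∫ (ω θ, ω θ • θ) dρ`, `ω = e^{-αL}`. As `e^{-α L̄} ≤ ω ≤ e^{-α L̲}`, the denominator `a`
stays above `e^{-α L̄}` and `v` is bounded by the fourth moment, so the quotient is Lipschitz in
`(a, v)` and it suffices to compare weighted moments. For a coupling `γ` of two measures their
difference is `∫ (Φ θ - Φ θ̂) dγ` with `Φ θ = (ω θ, ω θ • θ)`; the local Lipschitz bound on `L` gives
`|Φ θ - Φ θ̂| ≤ c (1 + |θ|² + |θ̂|²) |θ - θ̂|`, and Cauchy–Schwarz against the fourth moments yields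
`c √(3 (1 + 2K)) (∫ |θ - θ̂|² dγ)^{1/2}`; the infimum over `γ` is `W₂`. The weighted moments are
linear in the measure, so the mixture is handled component by component: a single coupling of the
two mixtures would only bound the difference by `√(w₁ W₂(ν¹)² + w₂ W₂(ν²)²)`, which is larger.
-/

lemma abs_exp_sub_exp_le {u v c : ℝ} (hu : u ≤ c) (hv : v ≤ c) :
    |exp u - exp v| ≤ exp c * |u - v| := by
  wlog h : v ≤ u generalizing u v
  · rw [abs_sub_comm, abs_sub_comm u]
    exact this hv hu (le_of_not_ge h)
  have hexp : exp v = exp u * exp (v - u) := by rw [← exp_add]; ring_nf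
  have hmvt : exp u - exp v ≤ exp u * (u - v) := by
    nlinarith [add_one_le_exp (v - u), exp_pos u]
  rw [abs_of_nonneg (sub_nonneg.2 (exp_le_exp.2 h)), abs_of_nonneg (sub_nonneg.2 h)]
  exact hmvt.trans (mul_le_mul_of_nonneg_right (exp_le_exp.2 hu) (sub_nonneg.2 h))

lemma norm_inv_smul_sub_inv_smul_le {V : Type*} [NormedAddCommGroup V] [NormedSpace ℝ V]
    {a a' m R : ℝ} {u u' : V} (hm : 0 < m) (ha : m ≤ a) (ha' : m ≤ a') (hu' : ‖u'‖ ≤ R) :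
    ‖a⁻¹ • u - a'⁻¹ • u'‖ ≤ (m⁻¹ + m⁻¹ ^ 2 * R) * ‖(a, u) - (a', u')‖ := by
  have ha₀ : 0 < a := hm.trans_le ha
  have ha'₀ : 0 < a' := hm.trans_le ha'
  have hΔa : |a - a'| ≤ ‖(a, u) - (a', u')‖ := norm_fst_le ((a, u) - (a', u'))
  have hΔu : ‖u - u'‖ ≤ ‖(a, u) - (a', u')‖ := norm_snd_le ((a, u) - (a', u'))
  have hinv : |a⁻¹ - a'⁻¹| ≤ m⁻¹ ^ 2 * |a - a'| := by
    rw [inv_sub_inv ha₀.ne' ha'₀.ne', abs_div, abs_sub_comm, abs_of_pos (mul_pos ha₀ ha'₀),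
      div_eq_inv_mul, mul_inv, sq]
    gcongr
  calc ‖a⁻¹ • u - a'⁻¹ • u'‖ = ‖a⁻¹ • (u - u') + (a⁻¹ - a'⁻¹) • u'‖ := by
        rw [smul_sub, sub_smul]; abel_nf
    _ ≤ a⁻¹ * ‖u - u'‖ + |a⁻¹ - a'⁻¹| * R := by
        refine (norm_add_le _ _).trans (add_le_add ?_ ?_)
        · rw [norm_smul, norm_inv, norm_of_nonneg ha₀.le]
        · rw [norm_smul, norm_eq_abs]; gcongr
    _ ≤ m⁻¹ * ‖(a, u) - (a', u')‖ + m⁻¹ ^ 2 * ‖(a, u) - (a', u')‖ * R := by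
        have hR : 0 ≤ R := (norm_nonneg _).trans hu'
        gcongr
        exact hinv.trans (by gcongr)
    _ = (m⁻¹ + m⁻¹ ^ 2 * R) * ‖(a, u) - (a', u')‖ := by ring

lemma integral_mul_le_L2_mul_L2_of_nonneg {X : Type*} [MeasurableSpace X]
    {μ : Measure X} {f g : X → ℝ} (hf₀ : 0 ≤ f) (hg₀ : 0 ≤ g) (hf : MemLp f 2 μ)
    (hg : MemLp g 2 μ) :
    ∫ x, f x * g x ∂μ ≤ (∫ x, f x ^ 2 ∂μ) ^ (1 / 2 : ℝ) * (∫ x, g x ^ 2 ∂μ) ^ (1 / 2 : ℝ) := by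
  have h := integral_mul_le_Lp_mul_Lq_of_nonneg HolderConjugate.two_two
    (.of_forall hf₀) (.of_forall hg₀)
    (by rwa [ENNReal.ofReal_ofNat]) (by rwa [ENNReal.ofReal_ofNat])
  simpa only [rpow_two] using h

lemma integral_sub_integral_eq_integral_of_coupling {X F : Type*} [MeasurableSpace X]
    [NormedAddCommGroup F] [NormedSpace ℝ F] {γ : Measure (X × X)} {μ μ' : Measure X}
    (hγ₁ : γ.map Prod.fst = μ) (hγ₂ : γ.map Prod.snd = μ') {f : X → F}
    (hf : Integrable f μ) (hf' : Integrable f μ') :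
    ∫ x, f x ∂μ - ∫ x, f x ∂μ' = ∫ p, (f p.1 - f p.2) ∂γ := by
  subst hγ₁ hγ₂
  rw [integral_map measurable_fst.aemeasurable hf.aestronglyMeasurable,
    integral_map measurable_snd.aemeasurable hf'.aestronglyMeasurable]
  exact (integral_sub (hf.comp_measurable measurable_fst)
    (hf'.comp_measurable measurable_snd)).symm

section FourthMoment

variable {E : Type*} [NormedAddCommGroup E] [MeasurableSpace E]

structure FourthMomentLE (K : ℝ) (ρ : Measure E) : Prop where
  integrable : Integrable (fun x => ‖x‖ ^ 4) ρ
  integral_le : ∫ x, ‖x‖ ^ 4 ∂ρ ≤ K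

variable {K : ℝ}

lemma FourthMomentLE.nonneg {ρ : Measure E} (h : FourthMomentLE K ρ) : 0 ≤ K :=
  (integral_nonneg fun _ => by positivity).trans h.integral_le

variable [BorelSpace E] {γ : Measure (E × E)} {μ μ' : Measure E}

lemma FourthMomentLE.integrable_and_integral_le_of_coupling [IsProbabilityMeasure γ]
    (hγ₁ : γ.map Prod.fst = μ) (hγ₂ : γ.map Prod.snd = μ')
    (hμ : FourthMomentLE K μ) (hμ' : FourthMomentLE K μ') :
    Integrable (fun p : E × E => 1 + ‖p.1‖ ^ 4 + ‖p.2‖ ^ 4) γ ∧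
      ∫ p : E × E, (1 + ‖p.1‖ ^ 4 + ‖p.2‖ ^ 4) ∂γ ≤ 1 + 2 * K := by
  subst hγ₁ hγ₂
  have h₁ : Integrable (fun p : E × E => ‖p.1‖ ^ 4) γ :=
    hμ.integrable.comp_measurable measurable_fst
  have h₂ : Integrable (fun p : E × E => ‖p.2‖ ^ 4) γ :=
    hμ'.integrable.comp_measurable measurable_snd
  have hm : Measurable fun x : E => ‖x‖ ^ 4 := by fun_prop
  have h₀₁ : Integrable (fun p : E × E => 1 + ‖p.1‖ ^ 4) γ := (integrable_const 1).add h₁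
  refine ⟨h₀₁.add h₂, ?_⟩
  rw [integral_add h₀₁ h₂, integral_add (integrable_const 1) h₁]
  have e₁ := hμ.integral_le
  have e₂ := hμ'.integral_le
  rw [integral_map measurable_fst.aemeasurable hm.aestronglyMeasurable] at e₁
  rw [integral_map measurable_snd.aemeasurable hm.aestronglyMeasurable] at e₂
  simp only [integral_const, probReal_univ, smul_eq_mul, one_mul] at e₁ e₂ ⊢
  linarith

variable [SecondCountableTopology E] {F : Type*} [NormedAddCommGroup F] [NormedSpace ℝ F]

theorem norm_integral_sub_integral_le_of_coupling [IsProbabilityMeasure γ]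
    (hγ₁ : γ.map Prod.fst = μ) (hγ₂ : γ.map Prod.snd = μ')
    (hμ : FourthMomentLE K μ) (hμ' : FourthMomentLE K μ') {f : E → F}
    (hf : Integrable f μ) (hf' : Integrable f μ') {c : ℝ} (hc : 0 ≤ c)
    (hfc : ∀ x y, ‖f x - f y‖ ≤ c * (1 + ‖x‖ ^ 2 + ‖y‖ ^ 2) * ‖x - y‖) :
    ‖∫ x, f x ∂μ - ∫ x, f x ∂μ'‖ ≤
      c * √(3 * (1 + 2 * K)) * (∫ p, ‖p.1 - p.2‖ ^ 2 ∂γ) ^ (1 / 2 : ℝ) := by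
  set Q : E × E → ℝ := fun p => 1 + ‖p.1‖ ^ 4 + ‖p.2‖ ^ 4
  set G : E × E → ℝ := fun p => c * (1 + ‖p.1‖ ^ 2 + ‖p.2‖ ^ 2)
  set D : E × E → ℝ := fun p => ‖p.1 - p.2‖
  obtain ⟨hQ, hQK⟩ := FourthMomentLE.integrable_and_integral_le_of_coupling hγ₁ hγ₂ hμ hμ'
  have hG₀ : 0 ≤ G := fun p => by positivity
  have hD₀ : 0 ≤ D := fun p => norm_nonneg _
  have hGQ : ∀ p, G p ^ 2 ≤ 3 * c ^ 2 * Q p := fun p => by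
    have : (1 + ‖p.1‖ ^ 2 + ‖p.2‖ ^ 2) ^ 2 ≤ 3 * Q p := by
      nlinarith [sq_nonneg (‖p.1‖ ^ 2 - 1), sq_nonneg (‖p.2‖ ^ 2 - 1),
        sq_nonneg (‖p.1‖ ^ 2 - ‖p.2‖ ^ 2)]
    calc G p ^ 2 = c ^ 2 * (1 + ‖p.1‖ ^ 2 + ‖p.2‖ ^ 2) ^ 2 := by ring
      _ ≤ c ^ 2 * (3 * Q p) := by gcongr
      _ = 3 * c ^ 2 * Q p := by ring
  have hDQ : ∀ p, D p ^ 2 ≤ 2 * Q p := fun p => by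
    have := norm_sub_le p.1 p.2
    have : D p ^ 2 ≤ (‖p.1‖ + ‖p.2‖) ^ 2 := by gcongr
    nlinarith [sq_nonneg (‖p.1‖ - ‖p.2‖), sq_nonneg (‖p.1‖ ^ 2 - 1), sq_nonneg (‖p.2‖ ^ 2 - 1)]
  have hGint : Integrable (fun p => G p ^ 2) γ :=
    (hQ.const_mul _).mono' (by fun_prop) (.of_forall fun p => by
      rw [norm_of_nonneg (sq_nonneg _)]; exact hGQ p)
  have hDint : Integrable (fun p => D p ^ 2) γ :=
    (hQ.const_mul 2).mono' (by fun_prop) (.of_forall fun p => by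
      rw [norm_of_nonneg (sq_nonneg _)]; exact hDQ p)
  have hG : MemLp G 2 γ := (memLp_two_iff_integrable_sq (by fun_prop)).2 hGint
  have hD : MemLp D 2 γ := (memLp_two_iff_integrable_sq (by fun_prop)).2 hDint
  have hG2 : (∫ p, G p ^ 2 ∂γ) ^ (1 / 2 : ℝ) ≤ c * √(3 * (1 + 2 * K)) := by
    rw [← sqrt_eq_rpow, ← sqrt_sq hc, ← sqrt_mul (sq_nonneg c)]
    refine sqrt_le_sqrt ((integral_mono hGint (hQ.const_mul _) hGQ).trans ?_)
    rw [integral_const_mul]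
    nlinarith [sq_nonneg c]
  calc ‖∫ x, f x ∂μ - ∫ x, f x ∂μ'‖ = ‖∫ p, (f p.1 - f p.2) ∂γ‖ := by
        rw [integral_sub_integral_eq_integral_of_coupling hγ₁ hγ₂ hf hf']
    _ ≤ ∫ p, G p * D p ∂γ :=
        (norm_integral_le_integral_norm _).trans <| integral_mono_of_nonneg
          (.of_forall fun _ => norm_nonneg _) (hG.integrable_mul hD)
          (.of_forall fun p => hfc p.1 p.2)
    _ ≤ (∫ p, G p ^ 2 ∂γ) ^ (1 / 2 : ℝ) * (∫ p, D p ^ 2 ∂γ) ^ (1 / 2 : ℝ) :=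
        integral_mul_le_L2_mul_L2_of_nonneg hG₀ hD₀ hG hD
    _ ≤ c * √(3 * (1 + 2 * K)) * (∫ p, ‖p.1 - p.2‖ ^ 2 ∂γ) ^ (1 / 2 : ℝ) := by
        gcongr

end FourthMoment

lemma norm_prodMk_smul_sub_prodMk_smul_le {E : Type*} [NormedAddCommGroup E] [NormedSpace ℝ E]
    {e : E → ℝ} {b B : ℝ} (hb : ∀ x, |e x| ≤ b) (hB : 0 ≤ B)
    (he : ∀ x y, |e x - e y| ≤ B * (‖x‖ + ‖y‖) * ‖x - y‖) (x y : E) :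
    ‖(e x, e x • x) - (e y, e y • y)‖ ≤ (b + 2 * B) * (1 + ‖x‖ ^ 2 + ‖y‖ ^ 2) * ‖x - y‖ := by
  have hb₀ : 0 ≤ b := (abs_nonneg _).trans (hb 0)
  have hsum : ‖x‖ + ‖y‖ ≤ 2 * (1 + ‖x‖ ^ 2 + ‖y‖ ^ 2) := by
    nlinarith [sq_nonneg (‖x‖ - 1), sq_nonneg (‖y‖ - 1)]
  have hprod : (‖x‖ + ‖y‖) * ‖y‖ ≤ 2 * (1 + ‖x‖ ^ 2 + ‖y‖ ^ 2) := by
    nlinarith [sq_nonneg (‖x‖ - ‖y‖)]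
  have hone : 1 ≤ 1 + ‖x‖ ^ 2 + ‖y‖ ^ 2 := by nlinarith [sq_nonneg ‖x‖, sq_nonneg ‖y‖]
  refine norm_prod_le_iff.2 ⟨?_, ?_⟩
  · calc ‖e x - e y‖ ≤ B * (‖x‖ + ‖y‖) * ‖x - y‖ := he x y
      _ ≤ (b + 2 * B) * (1 + ‖x‖ ^ 2 + ‖y‖ ^ 2) * ‖x - y‖ := by
          refine mul_le_mul_of_nonneg_right ?_ (norm_nonneg _)
          nlinarith [mul_le_mul_of_nonneg_left hsum hB]
  · calc ‖e x • x - e y • y‖ = ‖e x • (x - y) + (e x - e y) • y‖ := by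
          rw [smul_sub, sub_smul]; abel_nf
      _ ≤ b * ‖x - y‖ + B * (‖x‖ + ‖y‖) * ‖x - y‖ * ‖y‖ := by
          refine (norm_add_le _ _).trans (add_le_add ?_ ?_) <;> rw [norm_smul, norm_eq_abs]
          · gcongr; exact hb x
          · gcongr; exact he x y
      _ = b * ‖x - y‖ + B * ((‖x‖ + ‖y‖) * ‖y‖) * ‖x - y‖ := by ring
      _ ≤ b * ((1 + ‖x‖ ^ 2 + ‖y‖ ^ 2) * ‖x - y‖) +
            B * (2 * (1 + ‖x‖ ^ 2 + ‖y‖ ^ 2)) * ‖x - y‖ := by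
          gcongr; exact le_mul_of_one_le_left (norm_nonneg _) hone
      _ = (b + 2 * B) * (1 + ‖x‖ ^ 2 + ‖y‖ ^ 2) * ‖x - y‖ := by ring

section Mixture

variable {d : ℕ} {w : Fin 2 → ℝ} {ν : Fin 2 → ℝ → Measure (EuclideanSpace ℝ (Fin d))} {t : ℝ}

lemma isProbabilityMeasure_mix2 (hw : ∀ k, 0 ≤ w k) (hwsum : w 0 + w 1 = 1)
    (hν : ∀ k, IsProbabilityMeasure (ν k t)) : IsProbabilityMeasure (mix2 w ν t) := by
  constructor
  simp [mix2, ← ENNReal.ofReal_add (hw 0) (hw 1), hwsum]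

variable {F : Type*} [NormedAddCommGroup F] {f : EuclideanSpace ℝ (Fin d) → F}

lemma integrable_mix2 (hf : ∀ k, Integrable f (ν k t)) : Integrable f (mix2 w ν t) :=
  ((hf 0).smul_measure ENNReal.ofReal_ne_top).add_measure
    ((hf 1).smul_measure ENNReal.ofReal_ne_top)

lemma integral_mix2 [NormedSpace ℝ F] (hw : ∀ k, 0 ≤ w k) (hf : ∀ k, Integrable f (ν k t)) :
    ∫ x, f x ∂mix2 w ν t = w 0 • ∫ x, f x ∂ν 0 t + w 1 • ∫ x, f x ∂ν 1 t := by
  rw [mix2, integral_add_measure ((hf 0).smul_measure ENNReal.ofReal_ne_top)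
    ((hf 1).smul_measure ENNReal.ofReal_ne_top), integral_smul_measure, integral_smul_measure,
    ENNReal.toReal_ofReal (hw 0), ENNReal.toReal_ofReal (hw 1)]

lemma FourthMomentLE.mix2 {K : ℝ} (hw : ∀ k, 0 ≤ w k) (hwsum : w 0 + w 1 = 1)
    (h : ∀ k, FourthMomentLE K (ν k t)) : FourthMomentLE K (mix2 w ν t) where
  integrable := integrable_mix2 fun k => (h k).integrable
  integral_le := by
    rw [integral_mix2 hw fun k => (h k).integrable, smul_eq_mul, smul_eq_mul]
    have h₀ := mul_le_mul_of_nonneg_left (h 0).integral_le (hw 0)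
    have h₁ := mul_le_mul_of_nonneg_left (h 1).integral_le (hw 1)
    linear_combination h₀ + h₁ + K * hwsum

lemma norm_integral_mix2_sub_le [NormedSpace ℝ F] (hw : ∀ k, 0 ≤ w k) {s : ℝ}
    (hft : ∀ k, Integrable f (ν k t)) (hfs : ∀ k, Integrable f (ν k s)) :
    ‖∫ x, f x ∂mix2 w ν t - ∫ x, f x ∂mix2 w ν s‖ ≤
      w 0 * ‖∫ x, f x ∂ν 0 t - ∫ x, f x ∂ν 0 s‖ + w 1 * ‖∫ x, f x ∂ν 1 t - ∫ x, f x ∂ν 1 s‖ := by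
  rw [integral_mix2 hw hft, integral_mix2 hw hfs, add_sub_add_comm, ← smul_sub, ← smul_sub]
  refine (norm_add_le _ _).trans_eq ?_
  rw [norm_smul, norm_smul, norm_of_nonneg (hw 0), norm_of_nonneg (hw 1)]

end Mixture

lemma W2_nonneg {d : ℕ} (μ μ' : Measure (EuclideanSpace ℝ (Fin d))) : 0 ≤ W2 μ μ' :=
  Real.sInf_nonneg <| by
    rintro _ ⟨γ, -, -, -, rfl⟩
    exact rpow_nonneg (integral_nonneg fun _ => sq_nonneg _) _

lemma le_mul_W2 {d : ℕ} {μ μ' : Measure (EuclideanSpace ℝ (Fin d))} [IsProbabilityMeasure μ]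
    [IsProbabilityMeasure μ'] {x D : ℝ} (hD : 0 < D)
    (h : ∀ γ : Measure (EuclideanSpace ℝ (Fin d) × EuclideanSpace ℝ (Fin d)),
      IsProbabilityMeasure γ → γ.map Prod.fst = μ → γ.map Prod.snd = μ' →
        x ≤ D * (∫ p, ‖p.1 - p.2‖ ^ 2 ∂γ) ^ (1 / 2 : ℝ)) :
    x ≤ D * W2 μ μ' := by
  rw [← div_le_iff₀' hD]
  refine le_csInf ⟨_, μ.prod μ', inferInstance, by simp, by simp, rfl⟩ ?_
  rintro _ ⟨γ, hγ, hγ₁, hγ₂, rfl⟩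
  rw [div_le_iff₀' hD]
  exact h γ hγ hγ₁ hγ₂

/-- A Lipschitz constant of `(a, v) ↦ a⁻¹ • v` on `{a ≥ e^{-αu}, ‖v‖ ≤ e^{-αl} (1 + K)}` times
the constant of `norm_integral_consensusIntegrand_sub_le_of_coupling`. -/
noncomputable def stabilityConstant (α K l u M : ℝ) : ℝ :=
  ((exp (-α * u))⁻¹ + (exp (-α * u))⁻¹ ^ 2 * (exp (-α * l) * (1 + K))) *
    ((exp (-α * l) + 2 * (α * exp (-α * l) * M)) * √(3 * (1 + 2 * K)))

lemma stabilityConstant_pos {α K l u M : ℝ} (hα : 0 ≤ α) (hK : 0 ≤ K) (hM : 0 ≤ M) :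
    0 < stabilityConstant α K l u M := by
  unfold stabilityConstant
  positivity

lemma exp_neg_mul_le_exp_neg_mul {α a b : ℝ} (hα : 0 ≤ α) (h : a ≤ b) :
    exp (-α * b) ≤ exp (-α * a) :=
  exp_le_exp.2 (by nlinarith)

section ConsensusIntegrand

variable {E : Type*} [NormedAddCommGroup E] [NormedSpace ℝ E]

noncomputable def consensusIntegrand (α : ℝ) (L : E → ℝ) (θ : E) : ℝ × E :=
  (exp (-α * L θ), exp (-α * L θ) • θ)

lemma consensusPoint_eq {d : ℕ} {α : ℝ} {L : EuclideanSpace ℝ (Fin d) → ℝ}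
    {ρ : Measure (EuclideanSpace ℝ (Fin d))} (h : Integrable (consensusIntegrand α L) ρ) :
    consensusPoint α L ρ =
      (∫ θ, consensusIntegrand α L θ ∂ρ).1⁻¹ • (∫ θ, consensusIntegrand α L θ ∂ρ).2 := by
  rw [fst_integral h, snd_integral h]
  rfl

variable {α l : ℝ} {L : E → ℝ} (hα : 0 ≤ α) (hl : ∀ θ, l ≤ L θ)
include hα hl

lemma norm_consensusIntegrand_snd_le (θ : E) :
    ‖(consensusIntegrand α L θ).2‖ ≤ exp (-α * l) * (1 + ‖θ‖ ^ 4) := by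
  rw [consensusIntegrand, norm_smul, norm_of_nonneg (exp_pos _).le]
  have : ‖θ‖ ≤ 1 + ‖θ‖ ^ 4 := by nlinarith [sq_nonneg (‖θ‖ ^ 2 - 1), sq_nonneg (‖θ‖ - 1)]
  exact mul_le_mul (exp_neg_mul_le_exp_neg_mul hα (hl θ)) this (norm_nonneg _) (exp_pos _).le

variable [MeasurableSpace E] [BorelSpace E] [SecondCountableTopology E] {ρ : Measure E}
  (hL : Continuous L)
include hL

lemma integrable_consensusIntegrand [IsFiniteMeasure ρ]
    (hρ : Integrable (fun θ => ‖θ‖ ^ 4) ρ) : Integrable (consensusIntegrand α L) ρ := by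
  refine Integrable.prodMk ((integrable_const (exp (-α * l))).mono' (by fun_prop)
    (.of_forall fun θ => ?_)) ((((integrable_const 1).add hρ).const_mul (exp (-α * l))).mono'
    (by fun_prop) (.of_forall (norm_consensusIntegrand_snd_le hα hl)))
  rw [norm_of_nonneg (exp_pos _).le]
  exact exp_neg_mul_le_exp_neg_mul hα (hl θ)

lemma norm_integral_consensusIntegrand_snd_le {K : ℝ} [IsProbabilityMeasure ρ]
    (hρ : FourthMomentLE K ρ) :
    ‖(∫ θ, consensusIntegrand α L θ ∂ρ).2‖ ≤ exp (-α * l) * (1 + K) := by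
  have hb : Integrable (fun θ : E => exp (-α * l) * (1 + ‖θ‖ ^ 4)) ρ :=
    ((integrable_const 1).add hρ.integrable).const_mul _
  rw [snd_integral (integrable_consensusIntegrand hα hl hL hρ.integrable)]
  refine (norm_integral_le_of_norm_le hb
    (.of_forall (norm_consensusIntegrand_snd_le hα hl))).trans ?_
  rw [integral_const_mul, integral_add (integrable_const 1) hρ.integrable]
  simp only [integral_const, probReal_univ, smul_eq_mul, one_mul]
  gcongr
  exact hρ.integral_le

lemma norm_integral_consensusIntegrand_sub_le_of_coupling {K M : ℝ} (hM : 0 ≤ M)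
    (hLip : ∀ x y, |L x - L y| ≤ M * (‖x‖ + ‖y‖) * ‖x - y‖)
    {γ : Measure (E × E)} [IsProbabilityMeasure γ] {μ μ' : Measure E}
    (hγ₁ : γ.map Prod.fst = μ) (hγ₂ : γ.map Prod.snd = μ')
    (hμ : FourthMomentLE K μ) (hμ' : FourthMomentLE K μ') :
    ‖∫ θ, consensusIntegrand α L θ ∂μ - ∫ θ, consensusIntegrand α L θ ∂μ'‖ ≤
      (exp (-α * l) + 2 * (α * exp (-α * l) * M)) * √(3 * (1 + 2 * K)) *
        (∫ p, ‖p.1 - p.2‖ ^ 2 ∂γ) ^ (1 / 2 : ℝ) := by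
  have : IsProbabilityMeasure μ :=
    hγ₁ ▸ Measure.isProbabilityMeasure_map measurable_fst.aemeasurable
  have : IsProbabilityMeasure μ' :=
    hγ₂ ▸ Measure.isProbabilityMeasure_map measurable_snd.aemeasurable
  have hweight : ∀ x y : E, |exp (-α * L x) - exp (-α * L y)| ≤
      α * exp (-α * l) * M * (‖x‖ + ‖y‖) * ‖x - y‖ := fun x y => by
    calc |exp (-α * L x) - exp (-α * L y)| ≤ exp (-α * l) * |-α * L x - -α * L y| :=
          abs_exp_sub_exp_le (by nlinarith [hl x]) (by nlinarith [hl y])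
      _ = α * exp (-α * l) * |L x - L y| := by
          rw [← mul_sub, abs_mul, abs_neg, abs_of_nonneg hα]; ring
      _ ≤ α * exp (-α * l) * (M * (‖x‖ + ‖y‖) * ‖x - y‖) := by gcongr; exact hLip x y
      _ = α * exp (-α * l) * M * (‖x‖ + ‖y‖) * ‖x - y‖ := by ring
  refine norm_integral_sub_integral_le_of_coupling hγ₁ hγ₂ hμ hμ'
    (integrable_consensusIntegrand hα hl hL hμ.integrable)
    (integrable_consensusIntegrand hα hl hL hμ'.integrable) (by positivity) fun x y =>
      norm_prodMk_smul_sub_prodMk_smul_le (e := fun θ => exp (-α * L θ)) (fun θ => ?_)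
        (by positivity) hweight x y
  rw [abs_of_pos (exp_pos _)]
  exact exp_neg_mul_le_exp_neg_mul hα (hl θ)

variable [CompleteSpace E]

lemma exp_neg_mul_le_integral_consensusIntegrand_fst {u : ℝ} (hu : ∀ θ, L θ ≤ u)
    [IsProbabilityMeasure ρ] (hρ : Integrable (fun θ => ‖θ‖ ^ 4) ρ) :
    exp (-α * u) ≤ (∫ θ, consensusIntegrand α L θ ∂ρ).1 := by
  have hΦ := integrable_consensusIntegrand hα hl hL hρ
  rw [fst_integral hΦ]
  calc exp (-α * u) = ∫ _, exp (-α * u) ∂ρ := by simp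
    _ ≤ ∫ θ, (consensusIntegrand α L θ).1 ∂ρ :=
        integral_mono (integrable_const _) hΦ.fst fun θ => exp_neg_mul_le_exp_neg_mul hα (hu θ)

end ConsensusIntegrand

theorem norm_consensusPoint_mix2_sub_le {d : ℕ} {α K l u M : ℝ} (hα : 0 ≤ α) (hM : 0 ≤ M)
    {L : EuclideanSpace ℝ (Fin d) → ℝ} (hL : Continuous L) (hl : ∀ θ, l ≤ L θ)
    (hu : ∀ θ, L θ ≤ u) (hLip : ∀ x y, |L x - L y| ≤ M * (‖x‖ + ‖y‖) * ‖x - y‖)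
    {w : Fin 2 → ℝ} (hw : ∀ k, 0 ≤ w k) (hwsum : w 0 + w 1 = 1)
    {ν : Fin 2 → ℝ → Measure (EuclideanSpace ℝ (Fin d))} {s t : ℝ}
    (hνs : ∀ k, IsProbabilityMeasure (ν k s)) (hνt : ∀ k, IsProbabilityMeasure (ν k t))
    (hKs : ∀ k, FourthMomentLE K (ν k s)) (hKt : ∀ k, FourthMomentLE K (ν k t)) :
    ‖consensusPoint α L (mix2 w ν t) - consensusPoint α L (mix2 w ν s)‖ ≤
      stabilityConstant α K l u M * (w 0 * W2 (ν 0 t) (ν 0 s) + w 1 * W2 (ν 1 t) (ν 1 s)) := by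
  set Φ := consensusIntegrand α L
  set D := (exp (-α * l) + 2 * (α * exp (-α * l) * M)) * √(3 * (1 + 2 * K))
  have hK : 0 ≤ K := (hKs 0).nonneg
  have hD : 0 < D := by positivity
  have hΦs : ∀ k, Integrable Φ (ν k s) := fun k =>
    integrable_consensusIntegrand hα hl hL (hKs k).integrable
  have hΦt : ∀ k, Integrable Φ (ν k t) := fun k =>
    integrable_consensusIntegrand hα hl hL (hKt k).integrable
  have hcomponent : ∀ k, ‖∫ θ, Φ θ ∂ν k t - ∫ θ, Φ θ ∂ν k s‖ ≤ D * W2 (ν k t) (ν k s) :=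
    fun k => le_mul_W2 hD fun _ _ hγ₁ hγ₂ =>
      norm_integral_consensusIntegrand_sub_le_of_coupling hα hl hL hM hLip hγ₁ hγ₂ (hKt k) (hKs k)
  have hmix : ‖∫ θ, Φ θ ∂mix2 w ν t - ∫ θ, Φ θ ∂mix2 w ν s‖ ≤
      D * (w 0 * W2 (ν 0 t) (ν 0 s) + w 1 * W2 (ν 1 t) (ν 1 s)) := by
    refine (norm_integral_mix2_sub_le hw hΦt hΦs).trans ?_
    have := hw 0
    have := hw 1
    calc _ ≤ w 0 * (D * W2 (ν 0 t) (ν 0 s)) + w 1 * (D * W2 (ν 1 t) (ν 1 s)) := by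
          gcongr <;> exact hcomponent _
      _ = _ := by ring
  have := isProbabilityMeasure_mix2 hw hwsum hνs
  have := isProbabilityMeasure_mix2 hw hwsum hνt
  have hmixs := FourthMomentLE.mix2 hw hwsum hKs
  have hmixt := FourthMomentLE.mix2 hw hwsum hKt
  rw [consensusPoint_eq (integrable_consensusIntegrand hα hl hL hmixt.integrable),
    consensusPoint_eq (integrable_consensusIntegrand hα hl hL hmixs.integrable)]
  calc _ ≤ ((exp (-α * u))⁻¹ + (exp (-α * u))⁻¹ ^ 2 * (exp (-α * l) * (1 + K))) *
        ‖∫ θ, Φ θ ∂mix2 w ν t - ∫ θ, Φ θ ∂mix2 w ν s‖ :=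
        norm_inv_smul_sub_inv_smul_le (exp_pos _)
          (exp_neg_mul_le_integral_consensusIntegrand_fst hα hl hL hu hmixt.integrable)
          (exp_neg_mul_le_integral_consensusIntegrand_fst hα hl hL hu hmixs.integrable)
          (norm_integral_consensusIntegrand_snd_le hα hl hL hmixs)
    _ ≤ _ := by
        rw [stabilityConstant, mul_assoc]
        gcongr

theorem consensusPoint_stability_in_time_general {d : ℕ} (T α K : ℝ)
    (hα : 0 < α) (hK : 0 < K)
    (L : Fin 2 → EuclideanSpace ℝ (Fin d) → ℝ)
    (ML CL MgL CgL : Fin 2 → ℝ)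
    (hA : ∀ k, Assumption1 (L k) (ML k) (CL k) (MgL k) (CgL k))
    (hbddAbove : ∀ k, BddAbove (Set.range (L k)))
    (w : Fin 2 → ℝ) (hw : ∀ k, 0 < w k) (hwsum : w 0 + w 1 = 1)
    (ν : Fin 2 → ℝ → Measure (EuclideanSpace ℝ (Fin d)))
    (hprob : ∀ k, ∀ t ∈ Set.Icc (0:ℝ) T, IsProbabilityMeasure (ν k t))
    (hmom : ∀ k, ∀ t ∈ Set.Icc (0:ℝ) T, Integrable (fun θ => ‖θ‖ ^ 4) (ν k t))
    (hmomK : ∀ k, ∀ t ∈ Set.Icc (0:ℝ) T, ∫ θ, ‖θ‖ ^ 4 ∂(ν k t) ≤ K) :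
    ∃ C > 0, ∀ s ∈ Set.Ioo (0:ℝ) T, ∀ t ∈ Set.Ioo (0:ℝ) T, ∀ k : Fin 2,
      ‖consensusPoint α (L k) (mix2 w ν t) - consensusPoint α (L k) (mix2 w ν s)‖ ≤
        C * (w 0 * W2 (ν 0 t) (ν 0 s) + w 1 * W2 (ν 1 t) (ν 1 s)) := by
  set C : Fin 2 → ℝ := fun k =>
    stabilityConstant α K (sInf (range (L k))) (sSup (range (L k))) (ML k)
  have hC : ∀ k, 0 < C k := fun k => stabilityConstant_pos hα.le hK.le (hA k).ML_pos.le
  refine ⟨max (C 0) (C 1), (hC 0).trans_le (le_max_left _ _), fun s hs t ht k => ?_⟩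
  have hs' := Ioo_subset_Icc_self hs
  have ht' := Ioo_subset_Icc_self ht
  calc _ ≤ C k * (w 0 * W2 (ν 0 t) (ν 0 s) + w 1 * W2 (ν 1 t) (ν 1 s)) :=
        norm_consensusPoint_mix2_sub_le hα.le (hA k).ML_pos.le (hA k).differentiable.continuous
          (fun θ => csInf_le (hA k).bddBelow (mem_range_self θ))
          (fun θ => le_csSup (hbddAbove k) (mem_range_self θ)) (hA k).locLip
          (fun j => (hw j).le) hwsum (fun j => hprob j s hs') (fun j => hprob j t ht')
          (fun j => ⟨hmom j s hs', hmomK j s hs'⟩) (fun j => ⟨hmom j t ht', hmomK j t ht'⟩)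
    _ ≤ max (C 0) (C 1) * (w 0 * W2 (ν 0 t) (ν 0 s) + w 1 * W2 (ν 1 t) (ν 1 s)) := by
        have := (hw 0).le
        have := (hw 1).le
        have := W2_nonneg (ν 0 t) (ν 0 s)
        have := W2_nonneg (ν 1 t) (ν 1 s)
        gcongr
        fin_cases k
        exacts [le_max_left _ _, le_max_right _ _]

/-- stability of the consensus points along curves of measures:
under Assumption 1 and boundedness from above of `L₁, L₂`, and uniform fourth-moment
bounds on the continuous curves `ν¹, ν²`, there is a constant `C > 0` such that for all
`s, t ∈ (0,T)` and `k = 1, 2`,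
`|m_{L_k}^α[ν_t] - m_{L_k}^α[ν_s]| ≤ C (w₁ W₂(ν_t¹, ν_s¹) + w₂ W₂(ν_t², ν_s²))`. -/
theorem consensusPoint_stability_in_time {d : ℕ} (T α K : ℝ)
    (hT : 0 < T) (hα : 0 < α) (hK : 0 < K)
    (L : Fin 2 → EuclideanSpace ℝ (Fin d) → ℝ)
    (ML CL MgL CgL : Fin 2 → ℝ)
    (hA : ∀ k, Assumption1 (L k) (ML k) (CL k) (MgL k) (CgL k))
    (hbddAbove : ∀ k, BddAbove (Set.range (L k)))
    (w : Fin 2 → ℝ) (hw : ∀ k, 0 < w k) (hwsum : w 0 + w 1 = 1)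
    (ν : Fin 2 → ℝ → Measure (EuclideanSpace ℝ (Fin d)))
    (hprob : ∀ k, ∀ t ∈ Set.Icc (0:ℝ) T, IsProbabilityMeasure (ν k t))
    (hcont : ∀ k (f : BoundedContinuousFunction (EuclideanSpace ℝ (Fin d)) ℝ),
      ContinuousOn (fun t => ∫ θ, f θ ∂(ν k t)) (Set.Icc (0:ℝ) T))
    (hmom : ∀ k, ∀ t ∈ Set.Icc (0:ℝ) T, Integrable (fun θ => ‖θ‖ ^ 4) (ν k t))
    (hmomK : ∀ k, ∀ t ∈ Set.Icc (0:ℝ) T, ∫ θ, ‖θ‖ ^ 4 ∂(ν k t) ≤ K) :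
    ∃ C > 0, ∀ s ∈ Set.Ioo (0:ℝ) T, ∀ t ∈ Set.Ioo (0:ℝ) T, ∀ k : Fin 2,
      ‖consensusPoint α (L k) (mix2 w ν t) - consensusPoint α (L k) (mix2 w ν s)‖ ≤
        C * (w 0 * W2 (ν 0 t) (ν 0 s) + w 1 * W2 (ν 1 t) (ν 1 s)) :=
  consensusPoint_stability_in_time_general T α K hα hK L ML CL MgL CgL hA hbddAbove w hw hwsum ν
    hprob hmom hmomK
end
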